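/- arXiv:1210.6296 — 2 statements merged into one kernel-verified Lean document; each statement's English description precedes it below -/
import Mathlib

section
/- Let n ≥ 3 and let 𝔱 be the real Lie algebra of strictly upper triangular (n+1)×(n+1) real matrices (the nilradical of the Borel subalgebra of sl(n+1,ℝ)). Then 𝔱 is n-step nilpotent and E_∞^{0,2}(𝔱) = 0: every closed 2-form ω on 𝔱 satisfies ω(x,y) = 0 for every x in 𝔱^{n-1} (the one-dimensional space of matrices whose only possibly nonzero entry is in position (1, n+1)) and every y ∈ 𝔱. -/
lemma strict_mul_zero {n : ℕ} (A B : Matrix (Fin n) (Fin n) ℝ)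
    (hA : ∀ i j : Fin n, j ≤ i → A i j = 0) (hB : ∀ i j : Fin n, j ≤ i → B i j = 0)
    {i j : Fin n} (h : j ≤ i) : (A * B) i j = 0 := by
  rw [Matrix.mul_apply]
  refine Finset.sum_eq_zero fun l _ => ?_
  by_cases hl : l ≤ i
  · rw [hA i l hl, zero_mul]
  · have : j ≤ l := le_trans h (le_of_not_ge hl)
    rw [hB l j this, mul_zero]

attribute [local instance 100] LieRing.ofAssociativeRing

/-- The Lie algebra of strictly upper triangular `n × n` real matrices. -/
def strictUpper (n : ℕ) : LieSubalgebra ℝ (Matrix (Fin n) (Fin n) ℝ) where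
  carrier := {X | ∀ i j : Fin n, j ≤ i → X i j = 0}
  add_mem' := fun {X Y} hX hY i j h => by
    simp [Matrix.add_apply, hX i j h, hY i j h]
  zero_mem' := fun i j _ => rfl
  smul_mem' := fun t {X} hX i j h => by
    simp [Matrix.smul_apply, hX i j h]
  lie_mem' := fun {X Y} hX hY i j h => by
    rw [Ring.lie_def, Matrix.sub_apply, strict_mul_zero X Y hX hY h,
      strict_mul_zero Y X hY hX h, sub_zero]

/-- A 2-form (alternating bilinear map) is closed if it satisfies the cocycle condition. -/
def IsClosed2Form {L : Type*} [LieRing L] [LieAlgebra ℝ L] (ω : L →ₗ[ℝ] L →ₗ[ℝ] ℝ) : Prop :=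
  ∀ x y z : L, ω ⁅x, y⁆ z + ω ⁅y, z⁆ x + ω ⁅z, x⁆ y = 0

set_option synthInstance.maxHeartbeats 1000000

/-!
Matrix indices run over `0, …, n`. An element of the `k`-th term of the lower central series
vanishes on and below the `k`-th superdiagonal, which gives `𝔱^n = 0`, while `E 0 n` is an
iterated bracket of the `E i (i + 1)` and lies in `𝔱^(n-1)`; so `𝔱^(n-1) = ℝ E 0 n`.
For a closed 2-form `ω` it then suffices that `ω (E 0 n) (E a b) = 0` for all `a < b`.
If `0 < a < b < n`, write `E 0 n = ⁅⁅E 0 a, E a b⁆, E b n⁆`: two cocycle identities add up to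
`2 ω (E 0 n) (E a b) = 0`. Otherwise `n ≥ 3` leaves some `0 < k < n` outside `{a, b}`, and the
cocycle identity for `E 0 n = ⁅E 0 k, E k n⁆` and `E a b` has its other two terms vanish.
-/

namespace Matrix

variable {R : Type*} [Ring R] {N : ℕ}

/-- Supported strictly above the `k`-th superdiagonal; `k = 0` is strict upper triangularity. -/
def IsAboveSuperdiag (k : ℕ) (A : Matrix (Fin N) (Fin N) R) : Prop :=
  ∀ i j : Fin N, (j : ℕ) ≤ i + k → A i j = 0

namespace IsAboveSuperdiag

variable {a b k l : ℕ} {A B : Matrix (Fin N) (Fin N) R}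

theorem mono (hA : IsAboveSuperdiag k A) (hlk : l ≤ k) : IsAboveSuperdiag l A :=
  fun i j h => hA i j (by omega)

theorem mul (hA : IsAboveSuperdiag a A) (hB : IsAboveSuperdiag b B) :
    IsAboveSuperdiag (a + b + 1) (A * B) := by
  intro i j h
  refine (mul_apply ..).trans <| Finset.sum_eq_zero fun l _ => ?_
  by_cases hl : (l : ℕ) ≤ i + a
  · rw [hA i l hl, zero_mul]
  · rw [hB l j (by omega), mul_zero]

theorem lie (hA : IsAboveSuperdiag a A) (hB : IsAboveSuperdiag b B) :
    IsAboveSuperdiag (a + b + 1) ⁅A, B⁆ := by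
  intro i j h
  rw [Ring.lie_def, sub_apply, hA.mul hB i j h, hB.mul hA i j (by omega), sub_zero]

end IsAboveSuperdiag

end Matrix

open Matrix

namespace strictUpper

variable {N : ℕ}

theorem isAboveSuperdiag_zero (x : strictUpper N) :
    IsAboveSuperdiag 0 (x : Matrix (Fin N) (Fin N) ℝ) :=
  fun i j h => x.2 i j (Fin.le_def.mpr h)

def filtration (N k : ℕ) : LieSubmodule ℝ (strictUpper N) (strictUpper N) where
  carrier := {x | IsAboveSuperdiag k (x : Matrix (Fin N) (Fin N) ℝ)}
  add_mem' hx hy i j h := by simp [hx i j h, hy i j h]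
  zero_mem' _ _ _ := rfl
  smul_mem' t _ hx i j h := by simp [hx i j h]
  lie_mem {x _} hm := ((isAboveSuperdiag_zero x).lie hm).mono (by omega)

theorem mem_filtration {k : ℕ} {x : strictUpper N} :
    x ∈ filtration N k ↔ IsAboveSuperdiag k (x : Matrix (Fin N) (Fin N) ℝ) := Iff.rfl

theorem lowerCentralSeries_le_filtration (k : ℕ) :
    LieModule.lowerCentralSeries ℝ (strictUpper N) (strictUpper N) k ≤ filtration N k := by
  induction k with
  | zero => exact fun x _ => isAboveSuperdiag_zero x
  | succ k ih =>
    rw [LieModule.lowerCentralSeries_succ, LieSubmodule.lie_le_iff]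
    intro x _ m hm
    simpa [mem_filtration] using (isAboveSuperdiag_zero x).lie (ih hm)

theorem filtration_eq_bot {k : ℕ} (h : N ≤ k + 1) : filtration N k = ⊥ := by
  refine (LieSubmodule.eq_bot_iff _).mpr fun x hx => Subtype.ext ?_
  ext i j
  exact hx i j (by omega)

def single (i j : Fin N) (hij : i < j) : strictUpper N :=
  ⟨Matrix.single i j 1, fun _ _ hqp => by
    rw [Matrix.single_apply_of_ne]
    rintro ⟨rfl, rfl⟩
    exact hqp.not_gt hij⟩

@[simp]
theorem coe_single (i j : Fin N) (hij : i < j) :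
    (single i j hij : Matrix (Fin N) (Fin N) ℝ) = Matrix.single i j 1 := rfl

theorem single_ne_zero (i j : Fin N) (hij : i < j) : single i j hij ≠ 0 := fun h => by
  simpa using congrArg (fun x : strictUpper N => (x : Matrix (Fin N) (Fin N) ℝ) i j) h

theorem lie_single_single (i j k : Fin N) (hij : i < j) (hjk : j < k) :
    ⁅single i j hij, single j k hjk⁆ = single i k (hij.trans hjk) := by
  ext : 1
  rw [LieSubalgebra.coe_bracket, coe_single, coe_single, coe_single, Ring.lie_def,
    single_mul_single_same, single_mul_single_of_ne (h := (hij.trans hjk).ne'), one_mul, sub_zero]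

theorem lie_single_single_of_ne {i j k l : Fin N} (hij : i < j) (hkl : k < l)
    (hjk : j ≠ k) (hli : l ≠ i) : ⁅single i j hij, single k l hkl⁆ = 0 := by
  ext : 1
  rw [LieSubalgebra.coe_bracket, coe_single, coe_single, Ring.lie_def,
    single_mul_single_of_ne (h := hjk), single_mul_single_of_ne (h := hli), sub_zero,
    ZeroMemClass.coe_zero]

theorem single_mem_lowerCentralSeries (k : ℕ) (i j : Fin N) (h : (i : ℕ) + k < j) :
    single i j (Fin.lt_def.mpr (by omega)) ∈
      LieModule.lowerCentralSeries ℝ (strictUpper N) (strictUpper N) k := by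
  induction k generalizing i with
  | zero => exact LieSubmodule.mem_top _
  | succ k ih =>
    let i' : Fin N := ⟨i + 1, by omega⟩
    have hii' : i < i' := Fin.lt_def.mpr (Nat.lt_succ_self _)
    have hi'j : i' < j := Fin.lt_def.mpr (by simp only [i']; omega)
    rw [LieModule.lowerCentralSeries_succ, ← lie_single_single i i' j hii' hi'j]
    exact LieSubmodule.lie_mem_lie (LieSubmodule.mem_top _) (ih i' (by simp only [i']; omega))

theorem eq_smul_single_of_mem_filtration {n : ℕ} {x : strictUpper (n + 1)}
    (hx : x ∈ filtration (n + 1) (n - 1)) (h : (0 : Fin (n + 1)) < Fin.last n) :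
    x = (x : Matrix (Fin (n + 1)) (Fin (n + 1)) ℝ) 0 (Fin.last n) • single 0 (Fin.last n) h := by
  ext i j : 2
  by_cases hij : i = 0 ∧ j = Fin.last n
  · obtain ⟨rfl, rfl⟩ := hij
    simp
  · rw [hx i j ?_]
    · simp [hij, eq_comm]
    · simp only [Fin.ext_iff, Fin.val_zero, Fin.val_last] at hij
      omega

theorem span_range_single :
    Submodule.span ℝ (Set.range fun p : {p : Fin N × Fin N // p.1 < p.2} =>
      single p.1.1 p.1.2 p.2) = ⊤ := by
  refine Submodule.eq_top_iff'.mpr fun x => ?_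
  have : x = ∑ p : {p : Fin N × Fin N // p.1 < p.2},
      (x : Matrix (Fin N) (Fin N) ℝ) p.1.1 p.1.2 • single p.1.1 p.1.2 p.2 := by
    ext i j : 2
    simp only [AddSubmonoidClass.coe_finsetSum, SetLike.val_smul, coe_single, smul_single,
      smul_eq_mul, mul_one, Matrix.sum_apply, single_apply]
    by_cases hij : i < j
    · rw [Fintype.sum_eq_single ⟨(i, j), hij⟩ fun p hp =>
        if_neg fun h => hp (Subtype.ext (Prod.ext h.1 h.2))]
      simp
    · rw [x.2 i j (not_lt.mp hij)]
      exact (Finset.sum_eq_zero fun p _ => if_neg fun ⟨h1, h2⟩ => hij (h1 ▸ h2 ▸ p.2)).symm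
  rw [this]
  exact Submodule.sum_mem _ fun p _ => Submodule.smul_mem _ _ (Submodule.subset_span ⟨p, rfl⟩)

end strictUpper

namespace IsClosed2Form

variable {L : Type*} [LieRing L] [LieAlgebra ℝ L] {ω : L →ₗ[ℝ] L →ₗ[ℝ] ℝ}

theorem apply_lie_eq_zero (hω : IsClosed2Form ω) {x y z : L} (hyz : ⁅y, z⁆ = 0)
    (hzx : ⁅z, x⁆ = 0) : ω ⁅x, y⁆ z = 0 := by
  simpa [hyz, hzx] using hω x y z

theorem apply_lie_lie_eq_zero (hω : IsClosed2Form ω) (halt : ω.IsAlt) {u v w : L}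
    (huw : ⁅u, w⁆ = 0) (hvwv : ⁅⁅v, w⁆, v⁆ = 0) (hvuv : ⁅v, ⁅u, v⁆⁆ = 0) :
    ω ⁅⁅u, v⁆, w⁆ v = 0 := by
  -- the cocycle identities at `(u, ⁅v, w⁆, v)` and `(⁅u, v⁆, w, v)` add up to
  -- `2 ω ⁅⁅u, v⁆, w⁆ v = 0`
  have h₁ := hω u ⁅v, w⁆ v
  have h₂ := hω ⁅u, v⁆ w v
  rw [leibniz_lie, huw, lie_zero, add_zero, hvwv, ← lie_skew v u] at h₁
  rw [hvuv, ← lie_skew w v] at h₂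
  have hskew := halt.neg ⁅u, v⁆ ⁅v, w⁆
  simp only [map_neg, map_zero, LinearMap.neg_apply, LinearMap.zero_apply, add_zero] at h₁ h₂
  linarith

section strictUpper

open strictUpper

variable {n : ℕ} {ω : strictUpper (n + 1) →ₗ[ℝ] strictUpper (n + 1) →ₗ[ℝ] ℝ}

theorem apply_single_zero_last_single (hω : IsClosed2Form ω) (halt : ω.IsAlt)
    (hn : 3 ≤ n) (h0 : (0 : Fin (n + 1)) < Fin.last n) {a b : Fin (n + 1)} (hab : a < b) :
    ω (single 0 (Fin.last n) h0) (single a b hab) = 0 := by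
  by_cases hinner : 0 < a ∧ b < Fin.last n
  · obtain ⟨h0a, hbn⟩ := hinner
    have : single 0 (Fin.last n) h0 = ⁅⁅single 0 a h0a, single a b hab⁆, single b _ hbn⁆ := by
      rw [lie_single_single, lie_single_single]
    rw [this]
    refine hω.apply_lie_lie_eq_zero halt ?_ ?_ ?_
    · exact lie_single_single_of_ne _ _ hab.ne h0.ne'
    · rw [lie_single_single]
      exact lie_single_single_of_ne _ _ (hab.trans hbn).ne' hab.ne'
    · rw [lie_single_single]
      exact lie_single_single_of_ne _ _ (h0a.trans hab).ne' hab.ne'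
  · obtain ⟨k, h0k, hkn, hka, hkb⟩ :
        ∃ k : Fin (n + 1), 0 < k ∧ k < Fin.last n ∧ k ≠ a ∧ k ≠ b := by
      refine ⟨⟨if (a : ℕ) = 1 ∨ (b : ℕ) = 1 then 2 else 1, by split_ifs <;> omega⟩, ?_⟩
      simp only [Fin.lt_def, Fin.ext_iff, Fin.val_last, Fin.val_zero, ne_eq] at hinner hab ⊢
      split_ifs <;> omega
    have : single 0 (Fin.last n) h0 = ⁅single 0 k h0k, single k _ hkn⁆ :=
      (lie_single_single _ _ _ _ _).symm
    rw [this]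
    refine hω.apply_lie_eq_zero ?_ ?_
    · exact lie_single_single_of_ne _ _ (hab.trans_le (Fin.le_last b)).ne' hkb.symm
    · exact lie_single_single_of_ne _ _ ((Fin.zero_le a).trans_lt hab).ne' hka

theorem apply_single_zero_last (hω : IsClosed2Form ω) (halt : ω.IsAlt)
    (hn : 3 ≤ n) (h0 : (0 : Fin (n + 1)) < Fin.last n) : ω (single 0 (Fin.last n) h0) = 0 :=
  LinearMap.ext_on_range span_range_single fun p =>
    hω.apply_single_zero_last_single halt hn h0 p.2

end strictUpper

end IsClosed2Form

/-- For `n ≥ 3`, the nilradical `𝔱` of the Borel subalgebra of `sl(n+1, ℝ)` (strictly upper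
triangular `(n+1) × (n+1)` matrices) is `n`-step nilpotent and satisfies
`E_∞^{0,2}(𝔱) = 0`. -/
theorem strictUpper_E02_eq_zero (n : ℕ) (hn : 3 ≤ n) :
    (LieModule.lowerCentralSeries ℝ (strictUpper (n + 1)) (strictUpper (n + 1)) n = ⊥ ∧
     LieModule.lowerCentralSeries ℝ (strictUpper (n + 1)) (strictUpper (n + 1)) (n - 1) ≠ ⊥) ∧
    ∀ ω : (strictUpper (n + 1)) →ₗ[ℝ] (strictUpper (n + 1)) →ₗ[ℝ] ℝ,
      (∀ x : strictUpper (n + 1), ω x x = 0) → IsClosed2Form ω →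
      ∀ x ∈ LieModule.lowerCentralSeries ℝ (strictUpper (n + 1)) (strictUpper (n + 1)) (n - 1),
        ∀ y : strictUpper (n + 1), ω x y = 0 := by
  have h0 : (0 : Fin (n + 1)) < Fin.last n := Fin.lt_def.mpr (by simp; omega)
  refine ⟨⟨?_, fun hbot => ?_⟩, fun ω halt hω x hx y => ?_⟩
  · exact eq_bot_iff.mpr <| (strictUpper.lowerCentralSeries_le_filtration n).trans
      (strictUpper.filtration_eq_bot le_rfl).le
  · have := strictUpper.single_mem_lowerCentralSeries (n - 1) 0 (Fin.last n) (by simp; omega)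
    exact strictUpper.single_ne_zero _ _ _ (by simpa [hbot] using this)
  · rw [strictUpper.eq_smul_single_of_mem_filtration
        (strictUpper.lowerCentralSeries_le_filtration _ hx) h0, map_smul,
      hω.apply_single_zero_last halt hn h0]
    simp
end

section
/- There is a Lie algebra structure on ℝ⁴ whose bracket on the standard basis e₁, e₂, e₃, e₄ is determined by [e₁,e₂] = e₃, [e₁,e₃] = e₄, with all other brackets of basis vectors equal to zero. This 4-dimensional 3-step nilpotent Lie algebra (the nilradical of the minimal parabolic subalgebra of the split form of so(5,ℂ)) admits a symplectic structure. -/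
/-!
The bracket is `⁅x, y⁆ = x₁ • D y - y₁ • D x`, where `D` is the shift `e₂ ↦ e₃ ↦ e₄ ↦ 0`,
`e₁ ↦ 0`. A bracket `φ x • D y - φ y • D x` satisfies the Jacobi identity for any linear form `φ`
vanishing on the image of `D`, since then `φ` kills every bracket. The form
`ω = e¹ ∧ e⁴ + e² ∧ e³` is closed by a direct computation, and it is nondegenerate because
`ω(x, (-x₄, -x₃, x₂, x₁)) = |x|²`.
-/

/-- The standard basis vector `eᵢ` of `ℝ⁴`. -/
noncomputable def e4 (i : Fin 4) : Fin 4 → ℝ := Pi.single i 1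

namespace LinearMap

variable {R M : Type*} [CommRing R] [AddCommGroup M] [Module R M]

/-- On `R e ⊕ ker φ` with `φ e = 1` and `D e = 0`, this is the bracket of the semidirect
product `R ⋉_D ker φ`. -/
def semidirectBracket (φ : M →ₗ[R] R) (D : M →ₗ[R] M) : M →ₗ[R] M →ₗ[R] M :=
  (lsmul R M).compl₁₂ φ D - ((lsmul R M).compl₁₂ φ D).flip

@[simp]
theorem semidirectBracket_apply (φ : M →ₗ[R] R) (D : M →ₗ[R] M) (x y : M) :
    semidirectBracket φ D x y = φ x • D y - φ y • D x :=
  rfl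

theorem semidirectBracket_self (φ : M →ₗ[R] R) (D : M →ₗ[R] M) (x : M) :
    semidirectBracket φ D x x = 0 :=
  sub_self _

theorem semidirectBracket_leibniz {φ : M →ₗ[R] R} {D : M →ₗ[R] M} (hφD : ∀ x, φ (D x) = 0)
    (x y z : M) :
    semidirectBracket φ D x (semidirectBracket φ D y z) =
      semidirectBracket φ D (semidirectBracket φ D x y) z +
        semidirectBracket φ D y (semidirectBracket φ D x z) := by
  simp only [semidirectBracket_apply, map_sub, map_smul, sub_apply, smul_apply, hφD]
  module

def wedge (f g : M →ₗ[R] R) : M →ₗ[R] M →ₗ[R] R :=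
  (mul R R).compl₁₂ f g - ((mul R R).compl₁₂ f g).flip

@[simp]
theorem wedge_apply (f g : M →ₗ[R] R) (x y : M) : wedge f g x y = f x * g y - f y * g x :=
  rfl

theorem wedge_self (f g : M →ₗ[R] R) (x : M) : wedge f g x x = 0 :=
  sub_self _

end LinearMap

open LinearMap

noncomputable def bracket4 : (Fin 4 → ℝ) →ₗ[ℝ] (Fin 4 → ℝ) →ₗ[ℝ] (Fin 4 → ℝ) :=
  semidirectBracket (proj 0) (pi ![0, 0, proj 1, proj 2])

noncomputable def omega4 : (Fin 4 → ℝ) →ₗ[ℝ] (Fin 4 → ℝ) →ₗ[ℝ] ℝ :=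
  wedge (proj 0) (proj 3) + wedge (proj 1) (proj 2)

theorem bracket4_apply (x y : Fin 4 → ℝ) :
    bracket4 x y = ![0, 0, x 0 * y 1 - y 0 * x 1, x 0 * y 2 - y 0 * x 2] := by
  funext i; fin_cases i <;> simp [bracket4]

theorem omega4_apply (x y : Fin 4 → ℝ) :
    omega4 x y = x 0 * y 3 - y 0 * x 3 + (x 1 * y 2 - y 1 * x 2) :=
  rfl

theorem omega4_self (x : Fin 4 → ℝ) : omega4 x x = 0 := by
  simp [omega4_apply]

theorem omega4_cocycle (x y z : Fin 4 → ℝ) :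
    omega4 (bracket4 x y) z + omega4 (bracket4 y z) x + omega4 (bracket4 z x) y = 0 := by
  simp only [omega4_apply, bracket4_apply, Matrix.cons_val, Matrix.cons_val_zero,
    Matrix.cons_val_one]
  ring

theorem omega4_apply_dual (x : Fin 4 → ℝ) : omega4 x ![-x 3, -x 2, x 1, x 0] = x ⬝ᵥ x := by
  simp only [omega4_apply, Matrix.cons_val, Matrix.cons_val_zero, Matrix.cons_val_one,
    dotProduct, Fin.sum_univ_four]
  ring

theorem omega4_nondegenerate {x : Fin 4 → ℝ} (hx : x ≠ 0) : ∃ y, omega4 x y ≠ 0 :=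
  ⟨_, by rwa [omega4_apply_dual, Ne, dotProduct_self_eq_zero]⟩

/-- There is a Lie algebra structure on `ℝ⁴` with `⁅e₁, e₂⁆ = e₃`, `⁅e₁, e₃⁆ = e₄` and all
other brackets of basis vectors zero (the nilradical of the minimal parabolic subalgebra of the
split form of `so(5, ℂ)`), and it admits a symplectic structure. -/
theorem dim4_nilradical_symplectic :
    ∃ B : (Fin 4 → ℝ) →ₗ[ℝ] (Fin 4 → ℝ) →ₗ[ℝ] (Fin 4 → ℝ),
      -- B is a Lie bracket: alternating and satisfying the Jacobi (Leibniz) identity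
      (∀ x : Fin 4 → ℝ, B x x = 0) ∧
      (∀ x y z : Fin 4 → ℝ, B x (B y z) = B (B x y) z + B y (B x z)) ∧
      -- the structure constants: [e₁,e₂] = e₃, [e₁,e₃] = e₄, all other brackets zero
      B (e4 0) (e4 1) = e4 2 ∧
      B (e4 0) (e4 2) = e4 3 ∧
      (∀ i j : Fin 4, ¬((i = 0 ∧ j = 1) ∨ (i = 1 ∧ j = 0) ∨ (i = 0 ∧ j = 2) ∨
          (i = 2 ∧ j = 0)) → B (e4 i) (e4 j) = 0) ∧
      -- it admits a symplectic structure
      ∃ ω : (Fin 4 → ℝ) →ₗ[ℝ] (Fin 4 → ℝ) →ₗ[ℝ] ℝ,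
        (∀ x : Fin 4 → ℝ, ω x x = 0) ∧
        (∀ x y z : Fin 4 → ℝ, ω (B x y) z + ω (B y z) x + ω (B z x) y = 0) ∧
        (∀ x : Fin 4 → ℝ, x ≠ 0 → ∃ y : Fin 4 → ℝ, ω x y ≠ 0) := by
  refine ⟨bracket4, semidirectBracket_self _ _,
    semidirectBracket_leibniz fun x ↦ by simp, ?_, ?_, ?_,
    omega4, omega4_self, omega4_cocycle, fun _ ↦ omega4_nondegenerate⟩
  · funext k; fin_cases k <;> simp [bracket4_apply, e4]
  · funext k; fin_cases k <;> simp [bracket4_apply, e4]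
  · intro i j hij
    fin_cases i <;> fin_cases j <;> simp_all [bracket4_apply, e4]
end
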